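/- arXiv:2202.02217 — 2 statements merged into one kernel-verified Lean document; each statement's English description precedes it below -/
import Mathlib

section
/- For any sequence of vectors v^(1),...,v^(n) in R^m each with ℓ1-norm at most 1, there exist signs ε_1,...,ε_n ∈ {-1,1} such that the signed sum ε_1 v^(1) + ... + ε_n v^(n) has ℓ∞-norm at most 2. -/
open Finset

private lemma bf_frozen {n m : ℕ} (v : Fin n → Fin m → ℝ) {x : Fin n → ℝ}
    (hx1 : ∀ j, |x j| = 1) :
    ∃ ε : Fin n → ℝ, (∀ j, ε j = 1 ∨ ε j = -1) ∧ (∀ j, |x j| = 1 → ε j = x j) ∧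
      ∀ i, |∑ j, (ε j - x j) * v j i| ≤ 2 := by
  refine ⟨x, fun j => (abs_eq (by norm_num)).mp (hx1 j), fun j _ => rfl, fun i => by simp⟩

private lemma bf_key {n m : ℕ} (v : Fin n → Fin m → ℝ) (hv : ∀ j, ∑ i, |v j i| ≤ 1) :
    ∀ k : ℕ, ∀ x : Fin n → ℝ, (∀ j, |x j| ≤ 1) →
    (univ.filter fun j => |x j| < 1).card ≤ k →
    ∃ ε : Fin n → ℝ, (∀ j, ε j = 1 ∨ ε j = -1) ∧ (∀ j, |x j| = 1 → ε j = x j) ∧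
      ∀ i, |∑ j, (ε j - x j) * v j i| ≤ 2 := by
  intro k
  induction k with
  | zero =>
    intro x hx hcard
    refine bf_frozen v fun j => le_antisymm (hx j) ?_
    by_contra h
    have hemp : (univ.filter fun j => |x j| < 1) = ∅ :=
      Finset.card_eq_zero.mp (Nat.le_zero.mp hcard)
    have : j ∈ univ.filter fun j => |x j| < 1 := by
      simp [lt_of_le_of_ne (hx j) (by intro he; exact h he.ge)]
    rw [hemp] at this
    simp at this
  | succ k ih =>
    intro x hx hcard
    set F : Finset (Fin n) := univ.filter fun j => |x j| < 1 with hFdef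
    by_cases hFne : F.Nonempty
    · -- floating coordinates exist
      set B : Finset (Fin m) := univ.filter fun i => 1 < ∑ j ∈ F, |v j i| with hBdef
      -- B.card < F.card
      have hmem_F : ∀ j, j ∈ F ↔ |x j| < 1 := by intro j; simp [hFdef]
      have hBF : B.card < F.card := by
        rcases B.eq_empty_or_nonempty with hB | hB
        · simpa [hB] using hFne.card_pos
        · have h1 : (B.card : ℝ) < ∑ i ∈ B, ∑ j ∈ F, |v j i| := by
            have := Finset.sum_lt_sum_of_nonempty hB
              (f := fun _ => (1:ℝ)) (g := fun i => ∑ j ∈ F, |v j i|)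
              (fun i hi => by simpa [hBdef] using hi)
            simpa using this
          have h2 : ∑ i ∈ B, ∑ j ∈ F, |v j i| ≤ (F.card : ℝ) := by
            rw [Finset.sum_comm]
            calc ∑ j ∈ F, ∑ i ∈ B, |v j i|
                ≤ ∑ j ∈ F, ∑ i, |v j i| :=
                  Finset.sum_le_sum fun j _ =>
                    Finset.sum_le_sum_of_subset_of_nonneg B.subset_univ
                      (fun i _ _ => abs_nonneg _)
              _ ≤ ∑ j ∈ F, 1 := Finset.sum_le_sum fun j _ => hv j
              _ = (F.card : ℝ) := by simp
          exact_mod_cast h1.trans_le h2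
      -- kernel vector
      let φ : (↥F → ℝ) →ₗ[ℝ] (↥B → ℝ) :=
        { toFun := fun y i => ∑ j : ↥F, y j * v j.1 i.1
          map_add' := by
            intro a b; funext i; simp [add_mul, Finset.sum_add_distrib]
          map_smul' := by
            intro c a; funext i; simp [Finset.mul_sum, mul_assoc] }
      have hφ : ¬ Function.Injective φ := by
        intro hinj
        have := LinearMap.finrank_le_finrank_of_injective hinj
        rw [Module.finrank_pi, Module.finrank_pi, Fintype.card_coe, Fintype.card_coe] at this
        omega
      obtain ⟨a, b, hab, hne⟩ := Function.not_injective_iff.mp hφ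
      set y0 : ↥F → ℝ := a - b with hy0
      have hy0ne : y0 ≠ 0 := sub_ne_zero.mpr hne
      have hy0ker : φ y0 = 0 := by rw [hy0, map_sub, hab, sub_self]
      set y : Fin n → ℝ := fun j => if h : j ∈ F then y0 ⟨j, h⟩ else 0 with hydef
      have hyF : ∀ j, j ∉ F → y j = 0 := fun j hj => by simp [hydef, hj]
      have hker : ∀ i ∈ B, ∑ j, y j * v j i = 0 := by
        intro i hi
        have e1 : ∑ j, y j * v j i = ∑ j ∈ F, y j * v j i :=
          (Finset.sum_subset F.subset_univ (fun j _ hj => by simp [hyF j hj])).symm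
        have e2 : ∑ j ∈ F, y j * v j i = ∑ j : ↥F, y0 j * v j.1 i := by
          rw [← Finset.sum_coe_sort]
          exact Finset.sum_congr rfl fun j _ => by simp [hydef]
        have e3 : (φ y0) ⟨i, hi⟩ = 0 := by rw [hy0ker]; rfl
        rw [e1, e2]; exact e3
      set S : Finset (Fin n) := univ.filter fun j => y j ≠ 0 with hSdef
      have hSne : S.Nonempty := by
        obtain ⟨j0, hj0⟩ := Function.ne_iff.mp hy0ne
        have hj0' : y0 j0 ≠ 0 := by simpa using hj0
        have hy : y j0.1 = y0 j0 := by simp [hydef, j0.2]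
        exact ⟨j0.1, by simp [hSdef, hy, hj0']⟩
      have hSF : ∀ j ∈ S, j ∈ F := by
        intro j hj
        by_contra h
        have hne' : y j ≠ 0 := by simpa [hSdef] using hj
        exact hne' (hyF j h)
      set t : Fin n → ℝ := fun j => ((if 0 < y j then 1 else -1) - x j) / y j with htdef
      have htpos : ∀ j ∈ S, 0 < t j := by
        intro j hj
        have hyj : y j ≠ 0 := by simpa [hSdef] using hj
        have hxj := abs_lt.mp ((hmem_F j).mp (hSF j hj))
        rcases lt_or_gt_of_ne hyj with h | h
        · have : t j = (-1 - x j) / y j := by simp [htdef, not_lt.mpr h.le]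
          rw [this]
          exact div_pos_of_neg_of_neg (by linarith [hxj.1]) h
        · have : t j = (1 - x j) / y j := by simp [htdef, h]
          rw [this]; exact div_pos (by linarith [hxj.2]) h
      set ts : ℝ := S.inf' hSne t with htsdef
      have hts0 : 0 ≤ ts := Finset.le_inf' hSne t fun j hj => (htpos j hj).le
      set x' : Fin n → ℝ := fun j => x j + ts * y j with hx'def
      have hx'frozen : ∀ j, y j = 0 → x' j = x j := fun j h => by simp [hx'def, h]
      have hx'le : ∀ j, |x' j| ≤ 1 := by
        intro j
        by_cases hyj : y j = 0
        · rw [hx'frozen j hyj]; exact hx j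
        · have hjS : j ∈ S := by simp [hSdef, hyj]
          have hxj := abs_lt.mp ((hmem_F j).mp (hSF j hjS))
          have hle : ts ≤ t j := Finset.inf'_le t hjS
          rcases lt_or_gt_of_ne hyj with h | h
          · have htj : t j * y j = -1 - x j := by
              simp only [htdef, not_lt.mpr h.le, if_neg, if_false]
              field_simp
            have h1 : t j * y j ≤ ts * y j := by
              exact mul_le_mul_of_nonpos_right hle h.le
            have h2 : ts * y j ≤ 0 := mul_nonpos_of_nonneg_of_nonpos hts0 h.le
            rw [abs_le]; constructor <;> simp only [hx'def] <;> nlinarith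
          · have htj : t j * y j = 1 - x j := by
              simp only [htdef, if_pos h]
              field_simp
            have h1 : ts * y j ≤ t j * y j := mul_le_mul_of_nonneg_right hle h.le
            have h2 : 0 ≤ ts * y j := mul_nonneg hts0 h.le
            rw [abs_le]; constructor <;> simp only [hx'def] <;> nlinarith
      have hfrozen_pres : ∀ j, |x j| = 1 → x' j = x j := by
        intro j h
        refine hx'frozen j (hyF j ?_)
        simp [hFdef, h]
      -- the argmin freezes
      obtain ⟨j0, hj0S, hj0⟩ := Finset.exists_mem_eq_inf' hSne t
      have hyj0 : y j0 ≠ 0 := by simpa [hSdef] using hj0S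
      have hx'j0 : |x' j0| = 1 := by
        have : x' j0 = if 0 < y j0 then 1 else -1 := by
          simp only [hx'def]; rw [htsdef, hj0]; simp only [htdef]
          field_simp
          ring
        rw [this]; split <;> norm_num
      have hcard' : (univ.filter fun j => |x' j| < 1).card ≤ k := by
        have hsub : (univ.filter fun j => |x' j| < 1) ⊆ F.erase j0 := by
          intro j hj
          have hj' : |x' j| < 1 := by simpa using hj
          refine Finset.mem_erase.mpr ⟨?_, ?_⟩
          · rintro rfl; exact absurd hx'j0 hj'.ne
          · rw [hmem_F]
            by_contra h
            have hx1 : |x j| = 1 := le_antisymm (hx j) (not_lt.mp h)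
            rw [hfrozen_pres j hx1, hx1] at hj'
            exact lt_irrefl _ hj'
        have := Finset.card_le_card hsub
        have hj0F : j0 ∈ F := hSF j0 hj0S
        rw [Finset.card_erase_of_mem hj0F] at this
        omega
      obtain ⟨ε, hsgn, hfz', hbd'⟩ := ih x' hx'le hcard'
      refine ⟨ε, hsgn, ?_, ?_⟩
      · intro j hj
        have hxx := hfrozen_pres j hj
        rw [← hxx] at hj ⊢
        exact hfz' j hj
      · intro i
        have hsplit : ∑ j, (ε j - x j) * v j i
            = (∑ j, (ε j - x' j) * v j i) + ts * ∑ j, y j * v j i := by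
          rw [Finset.mul_sum, ← Finset.sum_add_distrib]
          exact Finset.sum_congr rfl fun j _ => by simp only [hx'def]; ring
        by_cases hiB : i ∈ B
        · rw [hsplit, hker i hiB, mul_zero, add_zero]
          exact hbd' i
        · -- small row: pointwise bound
          have hrow : ∑ j ∈ F, |v j i| ≤ 1 := by
            by_contra h
            exact hiB (by simp [hBdef, lt_of_not_ge h])
          have hfz : ∀ j, j ∉ F → ε j = x j := by
            intro j hj
            have hx1 : |x j| = 1 := by
              have := (hmem_F j).not.mp hj
              exact le_antisymm (hx j) (not_lt.mp this)
            have hxx := hfrozen_pres j hx1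
            rw [← hxx] at hx1 ⊢
            exact hfz' j hx1
          calc |∑ j, (ε j - x j) * v j i|
              = |∑ j ∈ F, (ε j - x j) * v j i| := by
                congr 1
                exact (Finset.sum_subset F.subset_univ
                  (fun j _ hj => by rw [hfz j hj]; ring)).symm
            _ ≤ ∑ j ∈ F, |(ε j - x j) * v j i| := Finset.abs_sum_le_sum_abs _ _
            _ ≤ ∑ j ∈ F, 2 * |v j i| := by
                refine Finset.sum_le_sum fun j _ => ?_
                rw [abs_mul]
                refine mul_le_mul_of_nonneg_right ?_ (abs_nonneg _)
                have h1 : |ε j| = 1 := by rcases hsgn j with h | h <;> simp [h]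
                calc |ε j - x j| ≤ |ε j| + |x j| := abs_sub _ _
                  _ ≤ 1 + 1 := by rw [h1]; linarith [hx j]
                  _ = 2 := by norm_num
            _ = 2 * ∑ j ∈ F, |v j i| := by rw [Finset.mul_sum]
            _ ≤ 2 := by linarith
    · -- no floating coordinates
      rw [Finset.not_nonempty_iff_eq_empty] at hFne
      refine bf_frozen v fun j => le_antisymm (hx j) ?_
      by_contra h
      have : j ∈ F := by
        simp only [hFdef, Finset.mem_filter, Finset.mem_univ, true_and]
        exact lt_of_le_of_ne (hx j) fun he => h he.ge
      rw [hFne] at this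
      simp at this

/-- Beck–Fiala theorem (bounded ℓ1-norm setting): for vectors of ℓ1-norm at most 1
there exist signs with signed sum of ℓ∞-norm at most 2. -/
theorem stmt_0 (n m : ℕ) (v : Fin n → Fin m → ℝ)
    (hv : ∀ j, ∑ i, |v j i| ≤ 1) :
    ∃ ε : Fin n → ℝ, (∀ j, ε j = 1 ∨ ε j = -1) ∧
      ∀ i, |∑ j, ε j * v j i| ≤ 2 := by
  obtain ⟨ε, hsgn, -, hbd⟩ := bf_key v hv n (fun _ => 0) (by norm_num)
    (le_trans (Finset.card_filter_le _ _) (by simp))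
  exact ⟨ε, hsgn, fun i => by simpa using hbd i⟩
end

section
/- Given an integral assignment x (x_{ij} ∈ {0,1}, Σ_i x_{ij} = 1) satisfying, for every machine i and every interval [t1,t2], Σ_{j: r_j ∈ [t1,t2]} x_{ij} p_{ij} ≤ t2 - t1 + T, the schedule on each machine that processes assigned jobs in order of release time, each at the earliest possible time, completes every job j by time r_j + T; i.e., the max flow time is at most T. -/
/-!
On each machine, process its jobs in release order (ties broken by index), each as early as
possible. The completion time of job `j` is then the largest, over the jobs `a` released no later
than `j`, of `r a` plus the work released in `[r a, r j]`: the machine may idle before `a` but is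
busy from `r a` until `j` completes. The interval constraint on `[r a, r j]` bounds each of these
terms by `r j + T`.
-/

open Finset

section SingleMachine

variable {ι α : Type*} [DecidableEq ι] [LinearOrder α] (k : ι → α) (s : Finset ι) (r p : ι → ℝ)

def jobsBetween (a b : ι) : Finset ι := {t ∈ s | k a ≤ k t ∧ k t ≤ k b}

/-- Completion time of `j` when the jobs of `s` are run in the order `k`, each as early as
possible. The `insert j` only makes the supremum total; it is redundant for `j ∈ s`. -/
noncomputable def greedyCompletion (j : ι) : ℝ :=
  (insert j {a ∈ s | k a ≤ k j}).sup' (insert_nonempty _ _)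
    fun a => r a + ∑ t ∈ jobsBetween k s a j, p t

variable {k s r p}

lemma le_greedyCompletion (hp : ∀ t, 0 ≤ p t) {j : ι} (hj : j ∈ s) :
    r j + p j ≤ greedyCompletion k s r p j := by
  have hjj : j ∈ jobsBetween k s j j := mem_filter.mpr ⟨hj, le_rfl, le_rfl⟩
  calc r j + p j ≤ r j + ∑ t ∈ jobsBetween k s j j, p t := by
        gcongr; exact single_le_sum (fun t _ => hp t) hjj
    _ ≤ greedyCompletion k s r p j := le_sup' (fun a => r a + ∑ t ∈ jobsBetween k s a j, p t)
        (mem_insert_self j _)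

lemma greedyCompletion_add_le (hp : ∀ t, 0 ≤ p t) {j j' : ι} (hj : j ∈ s) (hj' : j' ∈ s)
    (hlt : k j < k j') : greedyCompletion k s r p j + p j' ≤ greedyCompletion k s r p j' := by
  rw [← le_sub_iff_add_le]
  refine sup'_le _ _ fun a ha => le_sub_iff_add_le.mpr ?_
  have hka : a ∈ s ∧ k a ≤ k j := by
    rcases mem_insert.mp ha with rfl | ha
    · exact ⟨hj, le_rfl⟩
    · exact mem_filter.mp ha
  have hnot : j' ∉ jobsBetween k s a j := fun h => (mem_filter.mp h).2.2.not_gt hlt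
  have hsub : insert j' (jobsBetween k s a j) ⊆ jobsBetween k s a j' := by
    refine insert_subset (mem_filter.mpr ⟨hj', hka.2.trans hlt.le, le_rfl⟩) fun t ht => ?_
    obtain ⟨hts, hat, htj⟩ := mem_filter.mp ht
    exact mem_filter.mpr ⟨hts, hat, htj.trans hlt.le⟩
  calc r a + ∑ t ∈ jobsBetween k s a j, p t + p j'
      = r a + ∑ t ∈ insert j' (jobsBetween k s a j), p t := by rw [sum_insert hnot]; ring
    _ ≤ r a + ∑ t ∈ jobsBetween k s a j', p t := by
        gcongr; exact fun t _ _ => hp t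
    _ ≤ greedyCompletion k s r p j' :=
        le_sup' (fun a => r a + ∑ t ∈ jobsBetween k s a j', p t)
          (mem_insert_of_mem (mem_filter.mpr ⟨hka.1, hka.2.trans hlt.le⟩))

lemma greedyCompletion_le (hp : ∀ t, 0 ≤ p t) (hr : ∀ a b, k a ≤ k b → r a ≤ r b) {T : ℝ}
    (hload : ∀ t1 t2 : ℝ, t1 ≤ t2 → ∑ t ∈ s with t1 ≤ r t ∧ r t ≤ t2, p t ≤ t2 - t1 + T)
    {j : ι} (hj : j ∈ s) : greedyCompletion k s r p j ≤ r j + T := by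
  refine sup'_le _ _ fun a ha => ?_
  have hka : k a ≤ k j := by
    rcases mem_insert.mp ha with rfl | ha
    · exact le_rfl
    · exact (mem_filter.mp ha).2
  have hsub : jobsBetween k s a j ⊆ {t ∈ s | r a ≤ r t ∧ r t ≤ r j} := fun t ht => by
    obtain ⟨hts, hat, htj⟩ := mem_filter.mp ht
    exact mem_filter.mpr ⟨hts, hr _ _ hat, hr _ _ htj⟩
  have := (sum_le_sum_of_subset_of_nonneg hsub fun t _ _ => hp t).trans
    (hload (r a) (r j) (hr _ _ hka))
  linarith

end SingleMachine

section Assignment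

variable {n m : ℕ}

def releaseKey (r : Fin n → ℝ) (j : Fin n) : ℝ ×ₗ Fin n := toLex (r j, j)

lemma releaseKey_injective (r : Fin n → ℝ) : Function.Injective (releaseKey r) :=
  fun _ _ h => congrArg Prod.snd (toLex.injective h)

lemma release_le_of_releaseKey_le {r : Fin n → ℝ} {a b : Fin n}
    (h : releaseKey r a ≤ releaseKey r b) : r a ≤ r b :=
  Prod.Lex.monotone_fst _ _ h

noncomputable def assignedCompletion (p : Fin m → Fin n → ℝ) (r : Fin n → ℝ) (σ : Fin n → Fin m)
    (j : Fin n) : ℝ :=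
  greedyCompletion (releaseKey r) {t | σ t = σ j} r (p (σ j)) j

lemma release_add_le_assignedCompletion {p : Fin m → Fin n → ℝ} {r : Fin n → ℝ}
    {σ : Fin n → Fin m} (hp : ∀ i j, 0 ≤ p i j) (j : Fin n) :
    r j + p (σ j) j ≤ assignedCompletion p r σ j :=
  le_greedyCompletion (hp _) (by simp)

lemma assignedCompletion_add_le {p : Fin m → Fin n → ℝ} {r : Fin n → ℝ} {σ : Fin n → Fin m}
    (hp : ∀ i j, 0 ≤ p i j) {j j' : Fin n} (hσ : σ j = σ j')
    (hlt : releaseKey r j < releaseKey r j') :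
    assignedCompletion p r σ j + p (σ j') j' ≤ assignedCompletion p r σ j' := by
  unfold assignedCompletion
  rw [hσ]
  exact greedyCompletion_add_le (hp _) (by simpa using hσ) (by simp) hlt

lemma assignedCompletion_le {p : Fin m → Fin n → ℝ} {r : Fin n → ℝ} {σ : Fin n → Fin m} {T : ℝ}
    (hp : ∀ i j, 0 ≤ p i j)
    (hload : ∀ i (t1 t2 : ℝ), t1 ≤ t2 →
      ∑ j ∈ univ.filter (fun j => σ j = i ∧ t1 ≤ r j ∧ r j ≤ t2), p i j ≤ t2 - t1 + T)
    (j : Fin n) : assignedCompletion p r σ j ≤ r j + T := by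
  refine greedyCompletion_le (hp _) (fun _ _ => release_le_of_releaseKey_le) (fun t1 t2 h => ?_)
    (by simp)
  rw [filter_filter]
  exact hload (σ j) t1 t2 h

end Assignment

/-- An integral assignment satisfying all interval load constraints admits a
non-preemptive schedule (jobs in release order, at the earliest possible time) in which
every job completes by `r_j + T`, i.e. the max flow time is at most `T`. -/
theorem stmt_17 (n m : ℕ) (p : Fin m → Fin n → ℝ) (r : Fin n → ℝ) (T : ℝ)
    (hp : ∀ i j, 0 ≤ p i j)
    (σ : Fin n → Fin m)
    (hload : ∀ i (t1 t2 : ℝ), t1 ≤ t2 →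
      ∑ j ∈ Finset.univ.filter (fun j => σ j = i ∧ t1 ≤ r j ∧ r j ≤ t2), p i j
        ≤ t2 - t1 + T) :
    ∃ S Cmp : Fin n → ℝ,
      (∀ j, Cmp j = S j + p (σ j) j) ∧
      (∀ j, r j ≤ S j) ∧
      (∀ j j', σ j = σ j' → r j < r j' → S j ≤ S j') ∧
      (∀ j j', j ≠ j' → σ j = σ j' → Cmp j ≤ S j' ∨ Cmp j' ≤ S j) ∧
      (∀ j, Cmp j ≤ r j + T) := by
  set C := assignedCompletion p r σ
  refine ⟨fun j => C j - p (σ j) j, C, fun j => by ring, fun j => ?_, fun j j' hσ hr => ?_,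
    fun j j' hne hσ => ?_, assignedCompletion_le hp hload⟩
  · linarith [release_add_le_assignedCompletion (r := r) (σ := σ) hp j]
  · have := assignedCompletion_add_le hp hσ (Prod.Lex.toLex_lt_toLex.mpr (Or.inl hr))
    linarith [hp (σ j) j]
  · rcases (releaseKey_injective r).ne hne |>.lt_or_gt with hlt | hlt
    · exact .inl (by linarith [assignedCompletion_add_le hp hσ hlt])
    · exact .inr (by linarith [assignedCompletion_add_le hp hσ.symm hlt])
end
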